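/- arXiv:1506.03676 — 6 statements merged into one kernel-verified Lean document; each statement's English description precedes it below -/
import Mathlib

section
/- If Γ : [u] → V^d is a function such that every nonempty subset S ⊆ [u] with |S| ≤ k contains an element x with |Γ({x}) \ Γ(S \ {x})| > 0 (position-sensitive: Γ(S) = {(i, Γ(x)_i) : x ∈ S, 1 ≤ i ≤ d}), and h : {1,…,d} × V → R is a function into an abelian group R chosen by selecting each value h(i,v) independently and uniformly at random, then the function x ↦ ⊕_{i=1}^d h(i, Γ(x)_i) is k-independent: for any l ≤ k distinct keys x₁,…,x_l and any values y₁,…,y_l ∈ R, the probability that h∘Γ maps xⱼ to yⱼ for all j equals |R|^{-l}. -/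
open Finset

/-- Position-sensitive neighborhood: `nbr Γ S = {(i, Γ x i) : x ∈ S, i}`. -/
def nbr {U V ι : Type*} [DecidableEq V] [DecidableEq ι] [Fintype ι]
    (Γ : U → ι → V) (S : Finset U) : Finset (ι × V) :=
  (S ×ˢ (Finset.univ : Finset ι)).image (fun p => (p.2, Γ p.1 p.2))

private lemma nbr_mem {U V ι : Type*} [DecidableEq V] [DecidableEq ι] [Fintype ι]
    (Γ : U → ι → V) {S : Finset U} {z : U} (hz : z ∈ S) (i : ι) :
    (i, Γ z i) ∈ nbr Γ S :=
  Finset.mem_image.mpr ⟨(z, i), Finset.mem_product.mpr ⟨hz, Finset.mem_univ i⟩, rfl⟩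

/-- Siegel's expander hashing lemma (position-sensitive form): if `Γ` is `k`-unique
and `h : Fin d × V → R` is uniformly random, then `x ↦ ⊕ᵢ h (i, Γ x i)` is
`k`-independent. -/
theorem stmt0 {U V R : Type*} [Fintype U] [DecidableEq U] [Fintype V] [DecidableEq V]
    [AddCommGroup R] [Fintype R] [DecidableEq R] {d k : ℕ}
    (Γ : U → Fin d → V)
    (hunique : ∀ S : Finset U, S.Nonempty → S.card ≤ k →
      ∃ x ∈ S, 0 < ((nbr Γ {x}) \ (nbr Γ (S.erase x))).card)
    (T : Finset U) (hT : T.card ≤ k) (y : U → R) :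
    ((Finset.univ : Finset (Fin d × V → R)).filter
        (fun h => ∀ x ∈ T, (∑ i : Fin d, h (i, Γ x i)) = y x)).card
      * Fintype.card R ^ T.card
      = Fintype.card (Fin d × V → R) := by
  classical
  suffices H : ∀ n (T : Finset U), T.card ≤ k → T.card = n →
      ((Finset.univ : Finset (Fin d × V → R)).filter
        (fun h => ∀ x ∈ T, (∑ i : Fin d, h (i, Γ x i)) = y x)).card
      * Fintype.card R ^ T.card = Fintype.card (Fin d × V → R) by
    exact H T.card T hT rfl
  intro n
  induction n with
  | zero =>
    intro T hTk hn
    rw [Finset.card_eq_zero] at hn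
    subst hn
    simp
  | succ n ih =>
    intro T hTk hn
    have hTne : T.Nonempty := Finset.card_pos.mp (by omega)
    obtain ⟨x, hxT, hcard⟩ := hunique T hTne hTk
    obtain ⟨p, hp⟩ := Finset.card_pos.mp hcard
    rw [Finset.mem_sdiff] at hp
    obtain ⟨hp1, hp2⟩ := hp
    obtain ⟨⟨a, i0⟩, hai, hpe⟩ := Finset.mem_image.mp hp1
    rw [Finset.mem_product, Finset.mem_singleton] at hai
    obtain ⟨rfl, -⟩ := hai
    -- hpe : (i0, Γ a i0) = p
    have hne : ∀ z ∈ T.erase a, ∀ i : Fin d, (i, Γ z i) ≠ p := by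
      intro z hz i h
      exact hp2 (h ▸ nbr_mem Γ hz i)
    -- sum shift lemmas
    have hshift_erase : ∀ (h : Fin d × V → R) (r : R), ∀ z ∈ T.erase a,
        (∑ i : Fin d, (if (i, Γ z i) = p then h (i, Γ z i) + r else h (i, Γ z i)))
          = ∑ i : Fin d, h (i, Γ z i) := by
      intro h r z hz
      apply Finset.sum_congr rfl
      intro i _
      rw [if_neg (hne z hz i)]
    have hshift_x : ∀ (h : Fin d × V → R) (r : R),
        (∑ i : Fin d, (if (i, Γ a i) = p then h (i, Γ a i) + r else h (i, Γ a i)))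
          = (∑ i : Fin d, h (i, Γ a i)) + r := by
      intro h r
      have hpt : ∀ i : Fin d,
          (if (i, Γ a i) = p then h (i, Γ a i) + r else h (i, Γ a i))
            = h (i, Γ a i) + (if i = i0 then r else 0) := by
        intro i
        by_cases hi : i = i0
        · subst hi; rw [if_pos hpe, if_pos rfl]
        · rw [if_neg, if_neg hi, add_zero]
          intro hcon
          exact hi (congrArg Prod.fst (hcon.trans hpe.symm))
      rw [Finset.sum_congr rfl (fun i _ => hpt i), Finset.sum_add_distrib]
      congr 1
      simp
    set A := (Finset.univ : Finset (Fin d × V → R)).filter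
        (fun h => ∀ z ∈ T, (∑ i : Fin d, h (i, Γ z i)) = y z) with hA
    set B := (Finset.univ : Finset (Fin d × V → R)).filter
        (fun h => ∀ z ∈ T.erase a, (∑ i : Fin d, h (i, Γ z i)) = y z) with hB
    have key : A.card * Fintype.card R = B.card := by
      rw [← Finset.card_univ (α := R), ← Finset.card_product]
      refine Finset.card_bij'
        (fun (q : (Fin d × V → R) × R) (_ : q ∈ A ×ˢ Finset.univ) =>
          fun w => if w = p then q.1 w + q.2 else q.1 w)
        (fun (g : Fin d × V → R) (_ : g ∈ B) => (fun w =>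
            if w = p then g w - ((∑ i : Fin d, g (i, Γ a i)) - y a) else g w,
          (∑ i : Fin d, g (i, Γ a i)) - y a)) ?_ ?_ ?_ ?_
      · -- i maps into B
        intro q hq
        rw [Finset.mem_product, hA, Finset.mem_filter] at hq
        rw [hB, Finset.mem_filter]
        refine ⟨Finset.mem_univ _, ?_⟩
        intro z hz
        rw [hshift_erase q.1 q.2 z hz]
        exact hq.1.2 z (Finset.mem_of_mem_erase hz)
      · -- j maps into A ×ˢ univ
        intro g hg
        rw [hB, Finset.mem_filter] at hg
        rw [Finset.mem_product, hA, Finset.mem_filter]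
        refine ⟨⟨Finset.mem_univ _, ?_⟩, Finset.mem_univ _⟩
        intro z hz
        by_cases hza : z = a
        · subst hza
          have := hshift_x g (-((∑ i : Fin d, g (i, Γ z i)) - y z))
          simp only [add_neg_cancel_right, ← sub_eq_add_neg] at this ⊢
          rw [this]
          abel
        · have hz' : z ∈ T.erase a := Finset.mem_erase.mpr ⟨hza, hz⟩
          have := hshift_erase g (-((∑ i : Fin d, g (i, Γ a i)) - y a)) z hz'
          simp only [← sub_eq_add_neg] at this ⊢
          rw [this]
          exact hg.2 z hz'
      · -- left inverse
        intro q hq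
        rw [Finset.mem_product, hA, Finset.mem_filter] at hq
        have hsum : (∑ i : Fin d,
            (if (i, Γ a i) = p then q.1 (i, Γ a i) + q.2 else q.1 (i, Γ a i)))
              = y a + q.2 := by
          rw [hshift_x q.1 q.2, hq.1.2 a hxT]
        ext w
        · simp only
          by_cases hw : w = p
          · simp [hw, hsum]
          · simp [hw]
        · simp only [hsum]
          abel
      · -- right inverse
        intro g hg
        funext w
        simp only
        by_cases hw : w = p
        · simp [hw]
        · simp [hw]
    have herase : (T.erase a).card = n := by
      rw [Finset.card_erase_of_mem hxT, hn]; omega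
    have hB' := ih (T.erase a) (by omega) herase
    rw [herase] at hB'
    rw [hn, pow_succ, ← mul_assoc]
    calc A.card * Fintype.card R ^ n * Fintype.card R
        = A.card * Fintype.card R * Fintype.card R ^ n := by ring
      _ = B.card * Fintype.card R ^ n := by rw [key]
      _ = Fintype.card (Fin d × V → R) := hB'
end

section
/- Let Γ : U → V^d with |Γ(S)| defined position-sensitively as |{(i, Γ(x)_i) : x ∈ S, i ∈ [d]}|. If for every subset S ⊆ U with 2 ≤ |S| ≤ k we have |Γ(S)| > (3/4)·d·|S|, then Γ is k-majority-unique: every nonempty S ⊆ U with |S| ≤ k contains an element x such that |Γ({x}) \ Γ(S \ {x})| > d/2. -/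
open Finset

lemma nbr_singleton_card {U V : Type*} [DecidableEq U] [DecidableEq V] {d : ℕ}
    (Γ : U → Fin d → V) (x : U) : (nbr Γ ({x} : Finset U)).card = d := by
  unfold nbr
  rw [Finset.card_image_of_injOn, card_product, card_singleton, one_mul, card_univ,
    Fintype.card_fin]
  intro p hp q hq h
  simp only [mem_coe, mem_product, mem_singleton] at hp hq
  have h2 : p.2 = q.2 := congrArg Prod.fst h
  exact Prod.ext_iff.mpr ⟨hp.1.trans hq.1.symm, h2⟩

lemma nbr_biUnion {U V : Type*} [DecidableEq U] [DecidableEq V] {d : ℕ}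
    (Γ : U → Fin d → V) (S : Finset U) :
    nbr Γ S = S.biUnion (fun x => nbr Γ ({x} : Finset U)) := by
  ext e
  simp only [nbr, mem_image, mem_product, mem_biUnion, mem_singleton, mem_univ, and_true]
  constructor
  · rintro ⟨p, hp, rfl⟩
    exact ⟨p.1, hp, p, rfl, rfl⟩
  · rintro ⟨x, hx, p, hpx, rfl⟩
    exact ⟨p, hpx ▸ hx, rfl⟩

lemma nbr_mono {U V : Type*} [DecidableEq U] [DecidableEq V] {d : ℕ}
    (Γ : U → Fin d → V) {S T : Finset U} (h : S ⊆ T) : nbr Γ S ⊆ nbr Γ T :=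
  Finset.image_subset_image (Finset.product_subset_product h (Finset.Subset.refl _))

/-- Expansion `|Γ(S)| > (3/4) d |S|` on all sets of size `2..k` implies
`k`-majority-uniqueness. -/
theorem stmt1 {U V : Type*} [DecidableEq U] [DecidableEq V] {d k : ℕ} (hd : 0 < d)
    (Γ : U → Fin d → V)
    (hexp : ∀ S : Finset U, 2 ≤ S.card → S.card ≤ k →
      (3 / 4 : ℝ) * d * S.card < ((nbr Γ S).card : ℝ)) :
    ∀ S : Finset U, S.Nonempty → S.card ≤ k →
      ∃ x ∈ S, (d : ℝ) / 2 < (((nbr Γ {x}) \ (nbr Γ (S.erase x))).card : ℝ) := by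
  intro S hS hSk
  by_contra hcon
  push_neg at hcon
  -- each x has at most d/2 unique neighbors, i.e. 2*|Ux| ≤ d
  set Ux : U → Finset (Fin d × V) := fun x => (nbr Γ {x}) \ (nbr Γ (S.erase x)) with hUx
  have hU2 : ∀ x ∈ S, 2 * (Ux x).card ≤ d := by
    intro x hx
    have := hcon x hx
    have : ((2 * (Ux x).card : ℕ) : ℝ) ≤ (d : ℝ) := by
      push_cast
      linarith
    exact_mod_cast this
  -- case |S| = 1
  rcases Nat.lt_or_ge S.card 2 with h1 | h2
  · obtain ⟨x, rfl⟩ := Finset.card_eq_one.mp (le_antisymm (Nat.lt_succ_iff.mp h1)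
      (Finset.card_pos.mpr hS))
    have herase : ({x} : Finset U).erase x = ∅ := by simp
    have hnbr : nbr Γ (∅ : Finset U) = ∅ := by simp [nbr]
    have := hcon x (mem_singleton_self x)
    rw [herase, hnbr, sdiff_empty, nbr_singleton_card] at this
    have : (d : ℝ) < d := by linarith [this, (by positivity : (0:ℝ) < (d:ℝ))]
    exact absurd this (lt_irrefl _)
  -- case |S| ≥ 2: double counting
  · set B := S.biUnion Ux with hB
    set N := nbr Γ S with hN
    -- count pairs (x, e) with x ∈ S, e ∈ nbr{x}
    have hsub : ∀ x ∈ S, nbr Γ ({x} : Finset U) ⊆ N := by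
      intro x hx
      exact nbr_mono Γ (Finset.singleton_subset_iff.mpr hx)
    have hfilt : ∀ x ∈ S, N.filter (fun e => e ∈ nbr Γ ({x} : Finset U)) = nbr Γ ({x} : Finset U) := by
      intro x hx
      ext e
      simp only [mem_filter]
      exact ⟨fun h => h.2, fun h => ⟨hsub x hx h, h⟩⟩
    have hswap : ∑ x ∈ S, (nbr Γ ({x} : Finset U)).card
        = ∑ e ∈ N, (S.filter (fun x => e ∈ nbr Γ ({x} : Finset U))).card := by
      calc ∑ x ∈ S, (nbr Γ ({x} : Finset U)).card
          = ∑ x ∈ S, ∑ e ∈ N, (if e ∈ nbr Γ ({x} : Finset U) then 1 else 0) := by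
            apply Finset.sum_congr rfl
            intro x hx
            rw [← Finset.card_filter, hfilt x hx]
        _ = ∑ e ∈ N, ∑ x ∈ S, (if e ∈ nbr Γ ({x} : Finset U) then 1 else 0) :=
            Finset.sum_comm
        _ = ∑ e ∈ N, (S.filter (fun x => e ∈ nbr Γ ({x} : Finset U))).card := by
            apply Finset.sum_congr rfl
            intro e _
            rw [← Finset.card_filter]
    have hleft : ∑ x ∈ S, (nbr Γ ({x} : Finset U)).card = d * S.card := by
      rw [Finset.sum_congr rfl (fun x _ => nbr_singleton_card Γ x)]
      simp [mul_comm]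
    -- pointwise lower bound on multiplicity
    have hmult : ∀ e ∈ N, (1 + (if e ∈ B then 0 else 1)) ≤
        (S.filter (fun x => e ∈ nbr Γ ({x} : Finset U))).card := by
      intro e he
      rw [nbr_biUnion] at hN
      obtain ⟨x, hx, hex⟩ := Finset.mem_biUnion.mp (hN ▸ he)
      by_cases hb : e ∈ B
      · simp only [hb, if_true]
        exact Nat.one_le_iff_ne_zero.mpr (Finset.card_ne_zero_of_mem
          (Finset.mem_filter.mpr ⟨hx, hex⟩))
      · simp only [hb, if_false]
        -- e not unique to x, so e ∈ nbr (S.erase x), giving second witness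
        have hnx : e ∉ Ux x := fun h => hb (Finset.mem_biUnion.mpr ⟨x, hx, h⟩)
        have herase : e ∈ nbr Γ (S.erase x) := by
          by_contra h
          exact hnx (Finset.mem_sdiff.mpr ⟨hex, h⟩)
        rw [nbr_biUnion] at herase
        obtain ⟨y, hy, hey⟩ := Finset.mem_biUnion.mp herase
        have hyS : y ∈ S := Finset.mem_of_mem_erase hy
        have hxy : y ≠ x := Finset.ne_of_mem_erase hy
        have : 1 < (S.filter (fun x => e ∈ nbr Γ ({x} : Finset U))).card := by
          apply Finset.one_lt_card.mpr
          exact ⟨x, Finset.mem_filter.mpr ⟨hx, hex⟩, y, Finset.mem_filter.mpr ⟨hyS, hey⟩,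
            fun h => hxy h.symm⟩
        omega
    have hsum2 : N.card + (N \ B).card ≤ ∑ e ∈ N, (S.filter (fun x => e ∈ nbr Γ ({x} : Finset U))).card := by
      calc N.card + (N \ B).card = ∑ e ∈ N, (1 + (if e ∈ B then 0 else 1)) := by
            rw [Finset.sum_add_distrib]
            congr 1
            · exact Finset.card_eq_sum_ones N
            · rw [Finset.sdiff_eq_filter, Finset.card_filter]
              apply Finset.sum_congr rfl
              intro e _
              by_cases hb : e ∈ B <;> simp [hb]
        _ ≤ _ := Finset.sum_le_sum hmult
    have hBcard : B.card ≤ ∑ x ∈ S, (Ux x).card := Finset.card_biUnion_le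
    have hUsum : 2 * ∑ x ∈ S, (Ux x).card ≤ d * S.card := by
      rw [Finset.mul_sum]
      calc ∑ x ∈ S, 2 * (Ux x).card ≤ ∑ x ∈ S, d := Finset.sum_le_sum hU2
        _ = d * S.card := by simp [mul_comm]
    have hNB : N.card ≤ (N \ B).card + B.card := Finset.card_le_card_sdiff_add_card
    have hkey : 4 * N.card ≤ 3 * (d * S.card) := by omega
    have hbig := hexp S h2 hSk
    have : (3:ℝ) * (d * S.card) < 4 * N.card := by
      rw [hN]
      linarith
    have : (3 * (d * S.card) : ℕ) < 4 * N.card := by exact_mod_cast this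
    omega
end

section
/- Let Γ : U → V^d with position-sensitive neighborhoods. If for every subset S ⊆ U with 2 ≤ |S| ≤ k we have |Γ(S)| > (1/2)·d·|S|, then Γ is k-unique: every nonempty S ⊆ U with |S| ≤ k contains an element x such that Γ({x}) \ Γ(S \ {x}) is nonempty. -/
open Finset

/-- Expansion `|Γ(S)| > (1/2) d |S|` on all sets of size `2..k` implies
`k`-uniqueness. -/
theorem stmt2 {U V : Type*} [DecidableEq U] [DecidableEq V] {d k : ℕ} (hd : 0 < d)
    (Γ : U → Fin d → V)
    (hexp : ∀ S : Finset U, 2 ≤ S.card → S.card ≤ k →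
      (1 / 2 : ℝ) * d * S.card < ((nbr Γ S).card : ℝ)) :
    ∀ S : Finset U, S.Nonempty → S.card ≤ k →
      ∃ x ∈ S, 0 < (((nbr Γ {x}) \ (nbr Γ (S.erase x))).card) := by
  intro S hS hSk
  by_contra h
  push_neg at h
  -- from h : every x in S has nbr {x} ⊆ nbr (S.erase x)
  have hsub : ∀ x ∈ S, nbr Γ {x} ⊆ nbr Γ (S.erase x) := by
    intro x hx
    have := h x hx
    have : ((nbr Γ {x}) \ (nbr Γ (S.erase x))) = ∅ := by
      rw [← Finset.card_eq_zero]; omega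
    exact Finset.sdiff_eq_empty_iff_subset.mp this
  obtain ⟨x0, hx0⟩ := hS
  rcases eq_or_lt_of_le (Finset.one_le_card.mpr ⟨x0, hx0⟩) with h1 | h2
  · -- |S| = 1, so S = {x0}
    obtain ⟨y, hy⟩ := Finset.card_eq_one.mp h1.symm
    subst hy
    have hsub' := hsub y (mem_singleton_self y)
    simp only [Finset.erase_singleton] at hsub'
    have h1 : nbr Γ (∅ : Finset U) = ∅ := by simp [nbr]
    rw [h1, Finset.subset_empty] at hsub'
    have : ((⟨0, hd⟩ : Fin d), Γ y ⟨0, hd⟩) ∈ nbr Γ ({y} : Finset U) := by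
      simp [nbr]
    rw [hsub'] at this
    simp at this
  · -- |S| ≥ 2
    have h2' : 2 ≤ S.card := h2
    have hfib : ∀ b ∈ (S ×ˢ (Finset.univ : Finset (Fin d))).image
        (fun p => (p.2, Γ p.1 p.2)), 2 ≤
        ((S ×ˢ (Finset.univ : Finset (Fin d))).filter
          (fun a => (a.2, Γ a.1 a.2) = b)).card := by
      intro b hb
      obtain ⟨⟨x, i⟩, hxi, hfx⟩ := Finset.mem_image.mp hb
      simp only [Finset.mem_product, Finset.mem_univ, and_true] at hxi
      -- b ∈ nbr {x}, hence b ∈ nbr (S.erase x)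
      have hbx : b ∈ nbr Γ ({x} : Finset U) := by
        simp only [nbr, Finset.mem_image]
        exact ⟨(x, i), by simp, hfx⟩
      have hbe := hsub x hxi hbx
      simp only [nbr, Finset.mem_image] at hbe
      obtain ⟨⟨y, j⟩, hyj, hfy⟩ := hbe
      simp only [Finset.mem_product, Finset.mem_univ, and_true,
        Finset.mem_erase] at hyj
      -- b = (i, Γ x i) = (j, Γ y j), so j = i
      have hij : j = i := by
        have := hfy.trans hfx.symm
        exact (Prod.mk.injEq _ _ _ _).mp this |>.1
      rw [hij] at hfy
      have hxy : (x, i) ≠ (y, i) := by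
        intro hc
        exact hyj.1 ((Prod.mk.injEq _ _ _ _).mp hc).1.symm
      have hpair : ({(x, i), (y, i)} : Finset (U × Fin d)) ⊆
          (S ×ˢ (Finset.univ : Finset (Fin d))).filter
            (fun a => (a.2, Γ a.1 a.2) = b) := by
        intro p hp
        rcases Finset.mem_insert.mp hp with rfl | hp
        · exact Finset.mem_filter.mpr ⟨by simp [hxi], hfx⟩
        · rw [Finset.mem_singleton] at hp; subst hp
          exact Finset.mem_filter.mpr ⟨by simp [hyj.2], hfy⟩
      calc 2 = ({(x, i), (y, i)} : Finset (U × Fin d)).card := by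
              rw [Finset.card_insert_of_notMem (by simpa using hxy),
                Finset.card_singleton]
        _ ≤ _ := Finset.card_le_card hpair
    have hcount := Finset.mul_card_image_le_card
      (S ×ˢ (Finset.univ : Finset (Fin d))) 2 hfib
    have hEcard : (S ×ˢ (Finset.univ : Finset (Fin d))).card = S.card * d := by
      simp [Finset.card_product]
    rw [hEcard] at hcount
    have hnbr : nbr Γ S = (S ×ˢ (Finset.univ : Finset (Fin d))).image
        (fun p => (p.2, Γ p.1 p.2)) := rfl
    have hexp' := hexp S h2' hSk
    rw [← hnbr] at hcount
    -- hcount : 2 * (nbr Γ S).card ≤ S.card * d in ℕ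
    have : (2 : ℝ) * (nbr Γ S).card ≤ S.card * d := by
      exact_mod_cast hcount
    nlinarith
end

section
/- Let Γ : U → V^d be k-majority-unique, i.e., every nonempty S ⊆ U with |S| ≤ k contains x with |Γ({x}) \ Γ(S \ {x})| > d/2 (position-sensitive neighborhoods). Then the function Υ : U × U → (V × V)^d defined by Υ(x₁,x₂)_i = (Γ(x₁)_i, Γ(x₂)_i) is k-unique: every nonempty T ⊆ U × U with |T| ≤ k contains a pair (x₁,x₂) with |Υ({(x₁,x₂)}) \ Υ(T \ {(x₁,x₂)})| > 0. -/
open Finset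

lemma mem_nbr {U V ι : Type*} [DecidableEq V] [DecidableEq ι] [Fintype ι]
    (Γ : U → ι → V) (S : Finset U) (j : ι) (w : V) :
    (j, w) ∈ nbr Γ S ↔ ∃ x ∈ S, Γ x j = w := by
  constructor
  · intro h
    obtain ⟨p, hp, hpe⟩ := Finset.mem_image.1 h
    obtain ⟨h1, -⟩ := Finset.mem_product.1 hp
    obtain ⟨rfl, rfl⟩ := Prod.mk.injEq _ _ _ _ ▸ hpe
    exact ⟨p.1, h1, rfl⟩
  · rintro ⟨x, hx, rfl⟩
    exact Finset.mem_image.2 ⟨(x, j), Finset.mem_product.2 ⟨hx, Finset.mem_univ _⟩, rfl⟩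

/-- The unique-neighbor set of a singleton is controlled by unique positions. -/
lemma card_diff_le_card_pos {U V ι : Type*} [DecidableEq U] [DecidableEq V] [DecidableEq ι] [Fintype ι]
    (Γ : U → ι → V) (S : Finset U) (x : U) :
    ((nbr Γ {x}) \ (nbr Γ (S.erase x))).card ≤
      (Finset.univ.filter (fun i => (i, Γ x i) ∉ nbr Γ (S.erase x))).card := by
  apply Finset.card_le_card_of_injOn Prod.fst
  · intro a ha
    obtain ⟨h1, h2⟩ := Finset.mem_sdiff.1 ha
    obtain ⟨p, hp, hpe⟩ := Finset.mem_image.1 h1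
    obtain ⟨hp1, -⟩ := Finset.mem_product.1 hp
    rw [Finset.mem_singleton] at hp1
    subst hp1
    subst hpe
    simpa using h2
  · intro a ha b hb hab
    obtain ⟨h1, -⟩ := Finset.mem_sdiff.1 ha
    obtain ⟨h1b, -⟩ := Finset.mem_sdiff.1 hb
    obtain ⟨p, hp, rfl⟩ := Finset.mem_image.1 h1
    obtain ⟨q, hq, rfl⟩ := Finset.mem_image.1 h1b
    obtain ⟨hp1, -⟩ := Finset.mem_product.1 hp
    obtain ⟨hq1, -⟩ := Finset.mem_product.1 hq
    rw [Finset.mem_singleton] at hp1 hq1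
    simp only at hab
    simp [hp1, hq1, hab]

/-- Lemma 3 (graph concatenation product): if `Γ` is `k`-majority-unique, then
`Υ(x₁,x₂)ᵢ = (Γ(x₁)ᵢ, Γ(x₂)ᵢ)` is `k`-unique. -/
theorem stmt5 {U V : Type*} [DecidableEq U] [DecidableEq V] {d k : ℕ} (hd : 0 < d)
    (Γ : U → Fin d → V)
    (hmaj : ∀ S : Finset U, S.Nonempty → S.card ≤ k →
      ∃ x ∈ S, (d : ℝ) / 2 < (((nbr Γ {x}) \ (nbr Γ (S.erase x))).card : ℝ)) :
    ∀ T : Finset (U × U), T.Nonempty → T.card ≤ k →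
      ∃ p ∈ T,
        0 < ((nbr (fun (q : U × U) (i : Fin d) => (Γ q.1 i, Γ q.2 i)) {p}) \
              (nbr (fun (q : U × U) (i : Fin d) => (Γ q.1 i, Γ q.2 i)) (T.erase p))).card := by
  classical
  intro T hT hTk
  set S₁ : Finset U := T.image Prod.fst with hS₁def
  obtain ⟨x₁, hx₁S, hx₁⟩ := hmaj S₁ (hT.image _) (le_trans Finset.card_image_le hTk)
  set S₂ : Finset U := (T.filter (fun q => q.1 = x₁)).image Prod.snd with hS₂def
  have hS₂ne : S₂.Nonempty := by
    obtain ⟨p, hp, hpx⟩ := Finset.mem_image.1 hx₁S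
    exact ⟨p.2, Finset.mem_image.2 ⟨p, Finset.mem_filter.2 ⟨hp, hpx⟩, rfl⟩⟩
  obtain ⟨x₂, hx₂S, hx₂⟩ := hmaj S₂ hS₂ne
    (le_trans (le_trans Finset.card_image_le (Finset.card_filter_le _ _)) hTk)
  set P₁ : Finset (Fin d) := Finset.univ.filter (fun i => (i, Γ x₁ i) ∉ nbr Γ (S₁.erase x₁))
  set P₂ : Finset (Fin d) := Finset.univ.filter (fun i => (i, Γ x₂ i) ∉ nbr Γ (S₂.erase x₂))
  have hP₁ : (d : ℝ) / 2 < (P₁.card : ℝ) :=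
    lt_of_lt_of_le hx₁ (by exact_mod_cast card_diff_le_card_pos Γ S₁ x₁)
  have hP₂ : (d : ℝ) / 2 < (P₂.card : ℝ) :=
    lt_of_lt_of_le hx₂ (by exact_mod_cast card_diff_le_card_pos Γ S₂ x₂)
  have hsum : d < P₁.card + P₂.card := by
    have : (d : ℝ) < (P₁.card : ℝ) + (P₂.card : ℝ) := by linarith
    exact_mod_cast this
  have hinter : (P₁ ∩ P₂).Nonempty := by
    rw [← Finset.card_pos]
    have h1 := Finset.card_union_add_card_inter P₁ P₂
    have h2 : (P₁ ∪ P₂).card ≤ d := by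
      simpa using Finset.card_le_card (Finset.subset_univ (P₁ ∪ P₂))
    omega
  obtain ⟨i, hi⟩ := hinter
  have hi₁ : (i, Γ x₁ i) ∉ nbr Γ (S₁.erase x₁) := by
    have := Finset.mem_filter.1 (Finset.mem_inter.1 hi).1
    exact this.2
  have hi₂ : (i, Γ x₂ i) ∉ nbr Γ (S₂.erase x₂) := by
    have := Finset.mem_filter.1 (Finset.mem_inter.1 hi).2
    exact this.2
  have hpT : (x₁, x₂) ∈ T := by
    obtain ⟨q, hq, hq2⟩ := Finset.mem_image.1 hx₂S
    obtain ⟨hqT, hq1⟩ := Finset.mem_filter.1 hq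
    have : q = (x₁, x₂) := Prod.ext hq1 hq2
    rwa [this] at hqT
  refine ⟨(x₁, x₂), hpT, ?_⟩
  rw [Finset.card_pos]
  refine ⟨(i, (Γ x₁ i, Γ x₂ i)), Finset.mem_sdiff.2 ⟨?_, ?_⟩⟩
  · exact (mem_nbr _ _ _ _).2 ⟨(x₁, x₂), Finset.mem_singleton_self _, rfl⟩
  · intro hmem
    obtain ⟨y, hy, hyeq⟩ := (mem_nbr _ _ _ _).1 hmem
    obtain ⟨hyne, hyT⟩ := Finset.mem_erase.1 hy
    have h1 : Γ y.1 i = Γ x₁ i := congrArg Prod.fst hyeq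
    have h2 : Γ y.2 i = Γ x₂ i := congrArg Prod.snd hyeq
    have hy1 : y.1 = x₁ := by
      by_contra hne
      exact hi₁ ((mem_nbr _ _ _ _).2 ⟨y.1, Finset.mem_erase.2 ⟨hne,
        Finset.mem_image.2 ⟨y, hyT, rfl⟩⟩, h1⟩)
    have hy2 : y.2 ≠ x₂ := by
      intro h
      exact hyne (Prod.ext hy1 h)
    exact hi₂ ((mem_nbr _ _ _ _).2 ⟨y.2, Finset.mem_erase.2 ⟨hy2,
      Finset.mem_image.2 ⟨y, Finset.mem_filter.2 ⟨hyT, hy1⟩, rfl⟩⟩, h2⟩)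
end

section
/- For every choice of positive integers c, n, κ with m ≥ n + κ + 4 and d ≥ 8c, the following union bound holds: ∑_{i=2}^{2^κ} C(2^{cn}, i) · C(d·2^m, ⌈(3/4)d·i⌉) · ((3/4)d·i/(d·2^m))^{d·i} ≤ 2^{−2cn}, where C(a,b) denotes the binomial coefficient. -/
/-!
Bound the `i`-th summand by `C(N, i) ≤ N^i / i!` for `N = 2^{cn}` and, since `d·2^m · x ≤ K` for
`x = (3/4)di / (d·2^m)` and `K = ⌈(3/4)di⌉`, by Stirling's `C(d·2^m, K) x^K ≤ e^K / √(2πK)`.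
The leftover factor `x^q`, where `q = di - K = ⌊di/4⌋ ≥ 2ci`, is at most `(3/64)^q N^{-2i}`
because `x ≤ (3/64)·2^{-n}`; and `(3/64)^q` swallows the `e^{3q}` in `e^K ≤ e^{3q + i}`
(`K - 3q = di mod 4 ≤ i`) because `3e³/64 < 1`. What remains, `e^i / (i! · √(2πK) · N^i)`, is at
most `2^{1-i} N^{-2}` since `2e^i ≤ e²·i!` and `e² ≤ √(24π)`, and these bounds sum to at most
`N^{-2}` over `i ≥ 2`.
-/

open Finset Real Nat

lemma ceil_three_quarters_mul (a : ℕ) : ⌈(3 / 4 : ℝ) * a⌉₊ = a - a / 4 := by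
  obtain ⟨q, r, hr, rfl⟩ : ∃ q r, r < 4 ∧ a = r + 4 * q :=
    ⟨a / 4, a % 4, a.mod_lt four_pos, (a.mod_add_div 4).symm⟩
  rw [show r + 4 * q - (r + 4 * q) / 4 = r + 3 * q by omega,
    show (3 / 4 : ℝ) * (r + 4 * q : ℕ) = 3 / 4 * r + (3 * q : ℕ) by push_cast; ring,
    Nat.ceil_add_natCast (by positivity)]
  congr 1
  interval_cases r <;> norm_num [Nat.ceil_eq_iff]

lemma mul_mod_four_le {d i : ℕ} (hi : 2 ≤ i) : d * i % 4 ≤ i := by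
  obtain rfl | hi := hi.eq_or_lt
  · omega
  · have := Nat.mod_lt (d * i) four_pos
    omega

lemma choose_mul_pow_le_exp_div_sqrt {N K : ℕ} {y : ℝ} (hK : K ≠ 0) (hy : 0 ≤ y)
    (hNy : N * y ≤ K) : (N.choose K : ℝ) * y ^ K ≤ exp K / √(2 * π * K) := by
  have hK : (0 : ℝ) < K := by positivity
  calc (N.choose K : ℝ) * y ^ K ≤ (N : ℝ) ^ K / K ! * y ^ K := by
        gcongr; exact Nat.choose_le_pow_div K N
    _ = (N * y) ^ K / K ! := by rw [mul_pow]; ring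
    _ ≤ (K : ℝ) ^ K / (√(2 * π * K) * (K / exp 1) ^ K) := by
        gcongr; exact Stirling.le_factorial_stirling K
    _ = exp K / √(2 * π * K) := by rw [div_pow, exp_one_pow]; field_simp

lemma two_mul_exp_natCast_le {i : ℕ} (hi : 2 ≤ i) : 2 * exp i ≤ exp 2 * i ! := by
  induction i, hi using Nat.le_induction with
  | base => norm_num [mul_comm]
  | succ i hi ih =>
    have he : exp 1 ≤ i + 1 := by
      have : (2 : ℝ) ≤ i := by exact_mod_cast hi
      linarith [exp_one_lt_d9]
    calc 2 * exp (i + 1 : ℕ) = exp 1 * (2 * exp i) := by push_cast; rw [exp_add]; ring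
      _ ≤ (i + 1) * (exp 2 * i !) := by gcongr
      _ = exp 2 * (i + 1)! := by push_cast [factorial_succ]; ring

lemma sum_Icc_two_half_pow_le (M : ℕ) : ∑ i ∈ Icc 2 M, (1 / 2 : ℝ) ^ i ≤ 1 / 2 :=
  calc ∑ i ∈ Icc 2 M, (1 / 2 : ℝ) ^ i = ∑ i ∈ Ico 2 (M + 1), (1 / 2 : ℝ) ^ i := rfl
    _ ≤ (1 / 2) ^ 2 / (1 - 1 / 2) := geom_sum_Ico_le_of_lt_one (by norm_num) (by norm_num)
    _ = 1 / 2 := by norm_num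

lemma pow_mul_two_pow_le {x b : ℝ} {n k q : ℕ} (hx : 0 ≤ x) (hxb : x * 2 ^ n ≤ b)
    (hk : k ≤ n * q) : x ^ q * 2 ^ k ≤ b ^ q :=
  calc x ^ q * 2 ^ k ≤ x ^ q * (2 ^ n) ^ q := by
        rw [← pow_mul]; gcongr; norm_num
    _ = (x * 2 ^ n) ^ q := (mul_pow _ _ _).symm
    _ ≤ b ^ q := by gcongr

lemma three_quarters_mul_div_mul_two_pow_le {n κ m d i : ℕ} (hd : 0 < d) (hm : n + κ + 4 ≤ m)
    (hiκ : i ≤ 2 ^ κ) : (3 / 4 : ℝ) * d * i / (d * 2 ^ m) * 2 ^ n ≤ 3 / 64 := by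
  have h : i * 2 ^ n * 16 ≤ 2 ^ m := calc
    i * 2 ^ n * 16 ≤ 2 ^ κ * 2 ^ n * 16 := by gcongr
    _ = 2 ^ (n + κ + 4) := by ring
    _ ≤ 2 ^ m := Nat.pow_le_pow_right two_pos hm
  have h' : (i : ℝ) * 2 ^ n * 16 ≤ 2 ^ m := by exact_mod_cast h
  have hd' : (0 : ℝ) < d := by exact_mod_cast hd
  rw [div_mul_eq_mul_div, div_le_iff₀ (by positivity)]
  nlinarith

lemma pow_div_factorial_mul_exp_div_sqrt_mul_pow_le {a x : ℝ} {i q K : ℕ} (ha : 2 ≤ a)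
    (hx : 0 ≤ x) (hi : 2 ≤ i) (hK : 12 ≤ K) (hKq : K ≤ 3 * q + i)
    (hxq : x ^ q * a ^ (2 * i) ≤ (3 / 64) ^ q) :
    a ^ i / i ! * (exp K / √(2 * π * K)) * x ^ q ≤ (1 / 2) ^ i * (2 / a ^ 2) := by
  have hexpK : exp K ≤ exp 3 ^ q * exp i := by
    rw [← exp_nat_mul, ← exp_add]; gcongr; exact_mod_cast (by omega : K ≤ q * 3 + i)
  have hexp3 : exp 3 ^ q * (3 / 64) ^ q ≤ 1 := by
    rw [← mul_pow]
    refine pow_le_one₀ (by positivity) ?_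
    have h : exp 1 ^ 3 ≤ 2.7182818286 ^ 3 := by gcongr; exact exp_one_lt_d9.le
    rw [show (3 : ℝ) = (3 : ℕ) by norm_num, ← exp_one_pow]
    norm_num at h ⊢
    linarith
  have hsqrt : exp 2 ≤ √(2 * π * K) := by
    have h : exp 1 ^ 4 ≤ 2.7182818286 ^ 4 := by gcongr; exact exp_one_lt_d9.le
    have hK' : (12 : ℝ) ≤ K := by exact_mod_cast hK
    rw [le_sqrt (by positivity) (by positivity), ← exp_nat_mul,
      show ((2 : ℕ) : ℝ) * 2 = (4 : ℕ) by norm_num, ← exp_one_pow]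
    nlinarith [pi_gt_three]
  have hfact : exp i / i ! ≤ exp 2 / 2 := by
    rw [div_le_div_iff₀ (by positivity) two_pos]
    linarith [two_mul_exp_natCast_le hi]
  have hai : a ^ 2 * 2 ^ i ≤ 4 * a ^ i := by
    obtain ⟨j, rfl⟩ := Nat.exists_eq_add_of_le hi
    rw [pow_add, pow_add]
    nlinarith [pow_le_pow_left₀ zero_le_two ha j, pow_pos (by linarith : 0 < a) 2]
  calc a ^ i / i ! * (exp K / √(2 * π * K)) * x ^ q
      ≤ a ^ i / i ! * (exp 3 ^ q * exp i / exp 2) * x ^ q := by gcongr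
    _ = exp 3 ^ q * (x ^ q * a ^ (2 * i)) * (exp i / i !) / (exp 2 * a ^ i) := by
        field_simp; ring
    _ ≤ exp 3 ^ q * (3 / 64) ^ q * (exp 2 / 2) / (exp 2 * a ^ i) := by gcongr
    _ ≤ 1 * (exp 2 / 2) / (exp 2 * a ^ i) := by gcongr
    _ = 1 / (2 * a ^ i) := by field_simp
    _ ≤ (1 / 2) ^ i * (2 / a ^ 2) := by
        rw [one_div_pow]
        field_simp
        linarith

lemma summand_le {c n κ m d i : ℕ} (hc : 0 < c) (hn : 0 < n) (hm : n + κ + 4 ≤ m)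
    (hd : 8 * c ≤ d) (hi : 2 ≤ i) (hiκ : i ≤ 2 ^ κ) :
    (choose (2 ^ (c * n)) i : ℝ) * (choose (d * 2 ^ m) ⌈(3 / 4 : ℝ) * d * i⌉₊ : ℝ)
        * ((3 / 4 : ℝ) * d * i / (d * 2 ^ m)) ^ (d * i)
      ≤ (1 / 2) ^ i * (2 / (2 ^ (c * n)) ^ 2) := by
  set x : ℝ := (3 / 4 : ℝ) * d * i / (d * 2 ^ m) with hx
  set q := d * i / 4
  set K := d * i - q
  have hd8 : 8 ≤ d := le_trans (by omega) hd
  have hceil : ⌈(3 / 4 : ℝ) * d * i⌉₊ = K := by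
    rw [mul_assoc, ← Nat.cast_mul, ceil_three_quarters_mul]
  have hK : 12 ≤ K := by have := Nat.mul_le_mul hd8 hi; omega
  have hKq : K ≤ 3 * q + i := by have := mul_mod_four_le (d := d) hi; omega
  have hqc : 2 * (c * i) ≤ q := (Nat.le_div_iff_mul_le four_pos).2 <| calc
    2 * (c * i) * 4 = 8 * c * i := by ring
    _ ≤ d * i := Nat.mul_le_mul_right i hd
  have hd0 : (0 : ℝ) < d := by exact_mod_cast (by omega : 0 < d)
  have hx0 : 0 ≤ x := by positivity
  have hxq : x ^ q * ((2 : ℝ) ^ (c * n)) ^ (2 * i) ≤ (3 / 64) ^ q := by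
    rw [← pow_mul]
    refine pow_mul_two_pow_le hx0 (three_quarters_mul_div_mul_two_pow_le (by omega) hm hiκ) ?_
    calc c * n * (2 * i) = n * (2 * (c * i)) := by ring
      _ ≤ n * q := Nat.mul_le_mul_left n hqc
  have hA : (choose (2 ^ (c * n)) i : ℝ) ≤ ((2 : ℝ) ^ (c * n)) ^ i / i ! := by
    exact_mod_cast Nat.choose_le_pow_div (α := ℝ) i (2 ^ (c * n))
  have hB : (choose (d * 2 ^ m) K : ℝ) * x ^ K ≤ exp K / √(2 * π * K) := by
    refine choose_mul_pow_le_exp_div_sqrt (by omega) hx0 ?_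
    rw [← hceil, hx, Nat.cast_mul, Nat.cast_pow, Nat.cast_ofNat,
      mul_div_cancel₀ _ (by positivity)]
    exact Nat.le_ceil _
  rw [hceil, show d * i = K + q by omega, pow_add]
  calc (choose (2 ^ (c * n)) i : ℝ) * (choose (d * 2 ^ m) K) * (x ^ K * x ^ q)
      = (choose (2 ^ (c * n)) i : ℝ) * ((choose (d * 2 ^ m) K) * x ^ K) * x ^ q := by ring
    _ ≤ ((2 : ℝ) ^ (c * n)) ^ i / i ! * (exp K / √(2 * π * K)) * x ^ q := by gcongr
    _ ≤ (1 / 2) ^ i * (2 / (2 ^ (c * n)) ^ 2) :=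
      pow_div_factorial_mul_exp_div_sqrt_mul_pow_le (le_self_pow₀ one_le_two (by positivity))
        hx0 hi hK hKq hxq

theorem stmt10_general (c n κ m d : ℕ) (hc : 0 < c) (hn : 0 < n)
    (hm : n + κ + 4 ≤ m) (hd : 8 * c ≤ d) :
    ∑ i ∈ Finset.Icc 2 (2 ^ κ),
        ((Nat.choose (2 ^ (c * n)) i : ℝ)
          * (Nat.choose (d * 2 ^ m) (Nat.ceil ((3 / 4 : ℝ) * d * i)) : ℝ)
          * (((3 / 4 : ℝ) * d * i) / ((d : ℝ) * 2 ^ m)) ^ (d * i))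
      ≤ (2 : ℝ) ^ (-(2 * c * n : ℝ)) := by
  have hrpow : (2 : ℝ) ^ (-(2 * c * n : ℝ)) = 1 / 2 * (2 / (2 ^ (c * n)) ^ 2) := by
    rw [rpow_neg zero_le_two, show (2 * c * n : ℝ) = (c * n * 2 : ℕ) by push_cast; ring,
      rpow_natCast, pow_mul]
    ring
  calc _ ≤ ∑ i ∈ Icc 2 (2 ^ κ), (1 / 2 : ℝ) ^ i * (2 / (2 ^ (c * n)) ^ 2) :=
        sum_le_sum fun i hi ↦ summand_le hc hn hm hd (mem_Icc.1 hi).1 (mem_Icc.1 hi).2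
    _ = (∑ i ∈ Icc 2 (2 ^ κ), (1 / 2 : ℝ) ^ i) * (2 / (2 ^ (c * n)) ^ 2) := (sum_mul ..).symm
    _ ≤ 1 / 2 * (2 / (2 ^ (c * n)) ^ 2) := by gcongr; exact sum_Icc_two_half_pow_le _
    _ = (2 : ℝ) ^ (-(2 * c * n : ℝ)) := hrpow.symm

/-- The union-bound computation in the proof of Lemma 2 (majority-unique case):
for `m ≥ n + κ + 4` and `d ≥ 8c`,
`∑_{i=2}^{2^κ} C(2^{cn}, i) · C(d·2^m, ⌈(3/4)di⌉) · ((3/4)di/(d·2^m))^{di} ≤ 2^{−2cn}`. -/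
theorem stmt10 (c n κ m d : ℕ) (hc : 0 < c) (hn : 0 < n) (hκ : 0 < κ)
    (hm : n + κ + 4 ≤ m) (hd : 8 * c ≤ d) :
    ∑ i ∈ Finset.Icc 2 (2 ^ κ),
        ((Nat.choose (2 ^ (c * n)) i : ℝ)
          * (Nat.choose (d * 2 ^ m) (Nat.ceil ((3 / 4 : ℝ) * d * i)) : ℝ)
          * (((3 / 4 : ℝ) * d * i) / ((d : ℝ) * 2 ^ m)) ^ (d * i))
      ≤ (2 : ℝ) ^ (-(2 * c * n : ℝ)) :=
  stmt10_general c n κ m d hc hn hm hd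
end

section
/- If Γ : U → V^d is k-unique and h : V^d → R is given by h(y) = ⊕_{i=1}^d h_i(y_i) for uniformly random independent functions h_i : V → R into a finite abelian group R, then for each fixed nonempty S ⊆ U with |S| ≤ k and each x ∈ S having a unique neighbor (i₀, v₀) with respect to S, the value h(Γ(x)) is uniform in R and independent of the joint distribution of (h(Γ(y)))_{y ∈ S \ {x}}. -/
open Finset

/-- Inductive step in Siegel's proof of Lemma 1: if `x ∈ S` has a unique neighbor
`(i₀, Γ x i₀)` w.r.t. `S`, then for a uniformly random table `h : Fin d × V → R`
the value `⊕ᵢ h(i, Γ x i)` is uniform in `R` and independent of the values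
`(⊕ᵢ h(i, Γ y i))_{y ∈ S \ {x}}`. -/
theorem stmt19 {U V R : Type*} [Fintype U] [DecidableEq U] [Fintype V] [DecidableEq V]
    [AddCommGroup R] [Fintype R] [DecidableEq R] {d k : ℕ}
    (Γ : U → Fin d → V)
    (hunique : ∀ S : Finset U, S.Nonempty → S.card ≤ k →
      ∃ x ∈ S, 0 < ((nbr Γ {x}) \ (nbr Γ (S.erase x))).card)
    (S : Finset U) (hS : S.card ≤ k) (x : U) (hx : x ∈ S)
    (i₀ : Fin d) (hi₀ : (i₀, Γ x i₀) ∉ nbr Γ (S.erase x)) :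
    ∀ (z : R) (w : U → R),
      ((Finset.univ : Finset (Fin d × V → R)).filter
          (fun h => (∑ i : Fin d, h (i, Γ x i)) = z ∧
            ∀ y ∈ S.erase x, (∑ i : Fin d, h (i, Γ y i)) = w y)).card
        * Fintype.card R
      = ((Finset.univ : Finset (Fin d × V → R)).filter
          (fun h => ∀ y ∈ S.erase x, (∑ i : Fin d, h (i, Γ y i)) = w y)).card := by
  intro z w
  classical
  set p₀ : Fin d × V := (i₀, Γ x i₀) with hp₀
  have hne : ∀ y ∈ S.erase x, ∀ i : Fin d, (i, Γ y i) ≠ p₀ := by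
    intro y hy i h
    exact hi₀ (h ▸ Finset.mem_image.2 ⟨(y, i),
      Finset.mem_product.2 ⟨hy, Finset.mem_univ _⟩, rfl⟩)
  set φ : R → (Fin d × V → R) → (Fin d × V → R) :=
    fun r h p => if p = p₀ then h p + r else h p with hφ
  have hsum_x : ∀ (r : R) (h : Fin d × V → R),
      (∑ i : Fin d, φ r h (i, Γ x i)) = (∑ i : Fin d, h (i, Γ x i)) + r := by
    intro r h
    have key : ∀ i : Fin d, φ r h (i, Γ x i) = h (i, Γ x i) + (if i = i₀ then r else 0) := by
      intro i
      by_cases hi : i = i₀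
      · subst hi; simp [hφ, hp₀]
      · have hp : (i, Γ x i) ≠ p₀ := fun h' => hi (congrArg Prod.fst h')
        simp [hφ, hp, hi]
    rw [Finset.sum_congr rfl (fun i _ => key i), Finset.sum_add_distrib]
    simp
  have hsum_y : ∀ (r : R) (h : Fin d × V → R), ∀ y ∈ S.erase x,
      (∑ i : Fin d, φ r h (i, Γ y i)) = ∑ i : Fin d, h (i, Γ y i) := by
    intro r h y hy
    exact Finset.sum_congr rfl fun i _ => by simp [hφ, hne y hy i]
  have hφφ : ∀ (r s : R) (h : Fin d × V → R), φ r (φ s h) = φ (s + r) h := by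
    intro r s h
    funext p
    by_cases hp : p = p₀ <;> simp [hφ, hp, add_assoc]
  have hφ0 : ∀ h : Fin d × V → R, φ 0 h = h := by
    intro h; funext p; by_cases hp : p = p₀ <;> simp [hφ, hp]
  -- all fibers have the same card
  have hfib : ∀ z' : R,
      ((Finset.univ : Finset (Fin d × V → R)).filter
          (fun h => (∑ i : Fin d, h (i, Γ x i)) = z' ∧
            ∀ y ∈ S.erase x, (∑ i : Fin d, h (i, Γ y i)) = w y)).card
      = ((Finset.univ : Finset (Fin d × V → R)).filter
          (fun h => (∑ i : Fin d, h (i, Γ x i)) = z ∧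
            ∀ y ∈ S.erase x, (∑ i : Fin d, h (i, Γ y i)) = w y)).card := by
    intro z'
    apply Finset.card_bij' (fun h _ => φ (z - z') h) (fun h _ => φ (z' - z) h)
    · intro h hh
      rw [Finset.mem_filter] at hh ⊢
      obtain ⟨-, h1, h2⟩ := hh
      refine ⟨Finset.mem_univ _, ?_, ?_⟩
      · rw [hsum_x, h1]; abel
      · intro y hy; rw [hsum_y _ _ y hy]; exact h2 y hy
    · intro h hh
      rw [Finset.mem_filter] at hh ⊢
      obtain ⟨-, h1, h2⟩ := hh
      refine ⟨Finset.mem_univ _, ?_, ?_⟩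
      · rw [hsum_x, h1]; abel
      · intro y hy; rw [hsum_y _ _ y hy]; exact h2 y hy
    · intro h _; rw [hφφ]; simp [hφ0]
    · intro h _; rw [hφφ]; simp [hφ0]
  -- sum over fibers
  have hsplit :
      ((Finset.univ : Finset (Fin d × V → R)).filter
          (fun h => ∀ y ∈ S.erase x, (∑ i : Fin d, h (i, Γ y i)) = w y)).card
      = ∑ z' : R, ((Finset.univ : Finset (Fin d × V → R)).filter
          (fun h => (∑ i : Fin d, h (i, Γ x i)) = z' ∧
            ∀ y ∈ S.erase x, (∑ i : Fin d, h (i, Γ y i)) = w y)).card := by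
    rw [Finset.card_eq_sum_card_fiberwise
      (f := fun h => ∑ i : Fin d, h (i, Γ x i)) (fun h _ => Finset.mem_univ _)]
    apply Finset.sum_congr rfl
    intro z' _
    congr 1
    rw [Finset.filter_filter]
    apply Finset.filter_congr
    intro h _
    tauto
  rw [hsplit, Finset.sum_congr rfl (fun z' _ => hfib z')]
  rw [Finset.sum_const, smul_eq_mul, mul_comm, Fintype.card]
end
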